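/- arXiv:2305.01859 — 7 statements merged into one kernel-verified Lean document; each statement's English description precedes it below -/
import Mathlib

section
/- Let a >_lex b be two tuples in V_{n,d} (nonnegative integer vectors of coordinate sum d). Then the pair (a,b) is sorted (i.e., sort(a,b) = (a,b)) if and only if there exist indices 1 ≤ i_1 < i_2 < ⋯ < i_{2k−1} < i_{2k} ≤ n such that b_{i_{2j−1}} = a_{i_{2j−1}} − 1 and b_{i_{2j}} = a_{i_{2j}} + 1 for 1 ≤ j ≤ k, and b_t = a_t for all other indices t. -/
/-- The set `V_{n,d}^α` of nonnegative integer tuples with coordinate sum `d`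
and coordinatewise bound `α`. -/
def VT (n d : ℕ) (α : Fin n → ℕ) : Set (Fin n → ℕ) :=
  {c | (∑ i, c i) = d ∧ ∀ i, c i ≤ α i}

/-- `a >_lex b`: the leftmost nonzero entry of `a - b` is positive. -/
def lexGT {n : ℕ} (a b : Fin n → ℕ) : Prop :=
  ∃ i : Fin n, (∀ j, j < i → a j = b j) ∧ b i < a i

/-- `sort(a,b) = (a,b)` for Sturmfels' sorting operator: for every `t`, the prefix
sum of `a` up to `t` equals the ceiling of half the prefix sum of `a + b`. -/
def sortedPair {n : ℕ} (a b : Fin n → ℕ) : Prop :=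
  ∀ t : Fin n, 2 * (∑ i ∈ Finset.Iic t, a i)
    = (∑ i ∈ Finset.Iic t, (a i + b i)) + (∑ i ∈ Finset.Iic t, (a i + b i)) % 2

/-- The sorting signature set `Δ(a,b)` of a sorted pair, recorded (0-indexed) as the
set of positions `t` where the prefix sum of `b` is one less than that of `a`. -/
def sigSet {n : ℕ} (a b : Fin n → ℕ) : Finset (Fin n) :=
  Finset.univ.filter (fun t => (∑ i ∈ Finset.Iic t, b i) + 1 = ∑ i ∈ Finset.Iic t, a i)

/-- Adjacency in the sorting graph `𝒢(d,α)`. -/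
def adjG {n : ℕ} (a b : Fin n → ℕ) : Prop :=
  (lexGT a b ∧ sortedPair a b) ∨ (lexGT b a ∧ sortedPair b a)

/-- A clique of the sorting graph `𝒢(d,α)`. -/
def isClique (n d : ℕ) (α : Fin n → ℕ) (S : Finset (Fin n → ℕ)) : Prop :=
  (↑S ⊆ VT n d α) ∧ ∀ a ∈ S, ∀ b ∈ S, a ≠ b → adjG a b

/-- A maximal clique of the sorting graph `𝒢(d,α)`. -/
def isMaxClique (n d : ℕ) (α : Fin n → ℕ) (S : Finset (Fin n → ℕ)) : Prop :=
  isClique n d α S ∧ ∀ T, isClique n d α T → S ⊆ T → S = T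

/-- Condition (S): there exist indices `i_1 < i_2 < ⋯ < i_{2k}` such that `b`
decreases `a` by one at the odd-position indices, increases it by one at the
even-position indices, and agrees with `a` elsewhere. -/
def condS {n : ℕ} (a b : Fin n → ℕ) : Prop :=
  ∃ (k : ℕ) (f : Fin (2 * k) → Fin n), StrictMono f ∧
    (∀ j : Fin k,
      b (f ⟨2 * j.1, by have := j.2; omega⟩) + 1
        = a (f ⟨2 * j.1, by have := j.2; omega⟩) ∧
      b (f ⟨2 * j.1 + 1, by have := j.2; omega⟩)
        = a (f ⟨2 * j.1 + 1, by have := j.2; omega⟩) + 1) ∧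
    ∀ t : Fin n, (∀ j, f j ≠ t) → b t = a t


namespace Stmt2Aux

variable {n : ℕ}

def Af (a : Fin n → ℕ) (t : Fin n) : ℕ := ∑ i ∈ Finset.Iic t, a i

lemma Iic_zero (h : 0 < n) : Finset.Iic (⟨0, h⟩ : Fin n) = {⟨0, h⟩} := by
  ext x
  simp only [Finset.mem_Iic, Finset.mem_singleton, Fin.le_def, Fin.ext_iff]
  omega

lemma Iic_succ (m : ℕ) (h : m + 1 < n) :
    Finset.Iic (⟨m + 1, h⟩ : Fin n) = insert ⟨m + 1, h⟩ (Finset.Iic ⟨m, by omega⟩) := by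
  ext x
  simp only [Finset.mem_Iic, Finset.mem_insert, Fin.le_def, Fin.ext_iff]
  omega

lemma Af_zero (a : Fin n → ℕ) (h : 0 < n) : Af a ⟨0, h⟩ = a ⟨0, h⟩ := by
  simp [Af, Iic_zero h]

lemma Af_succ (a : Fin n → ℕ) (m : ℕ) (h : m + 1 < n) :
    Af a ⟨m + 1, h⟩ = Af a ⟨m, by omega⟩ + a ⟨m + 1, h⟩ := by
  unfold Af
  rw [Iic_succ m h, Finset.sum_insert (by simp [Finset.mem_Iic, Fin.le_def])]
  omega

lemma sortedPair_iff (a b : Fin n → ℕ) :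
    sortedPair a b ↔ ∀ t, Af a t = Af b t ∨ Af a t = Af b t + 1 := by
  constructor
  · intro h t
    have := h t
    rw [Finset.sum_add_distrib] at this
    unfold Af
    omega
  · intro h t
    have := h t
    unfold Af at this
    rw [Finset.sum_add_distrib]
    omega


def Nset (a b : Fin n → ℕ) : Finset (Fin n) :=
  Finset.univ.filter (fun i => a i ≠ b i)

lemma mem_Nset {a b : Fin n → ℕ} {t : Fin n} : t ∈ Nset a b ↔ a t ≠ b t := by
  simp [Nset]

lemma filter_lt_zero (a b : Fin n → ℕ) (h : 0 < n) :
    (Nset a b).filter (fun x => x < (⟨0, h⟩ : Fin n)) = ∅ := by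
  ext x
  simp only [Finset.mem_filter, Finset.notMem_empty, iff_false, not_and, Fin.lt_def]
  omega

lemma filter_lt_succ (a b : Fin n → ℕ) (m : ℕ) (h : m + 1 < n) :
    (Nset a b).filter (fun x => x < (⟨m + 1, h⟩ : Fin n))
      = (Nset a b).filter (fun x => x ≤ (⟨m, by omega⟩ : Fin n)) := by
  ext x
  simp only [Finset.mem_filter, Fin.lt_def, Fin.le_def]
  constructor <;> rintro ⟨h1, h2⟩ <;> exact ⟨h1, by omega⟩

lemma card_le_eq (a b : Fin n → ℕ) (t : Fin n) :
    ((Nset a b).filter (fun x => x ≤ t)).card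
      = ((Nset a b).filter (fun x => x < t)).card + (if a t = b t then 0 else 1) := by
  have hsplit : (Nset a b).filter (fun x => x ≤ t)
      = (Nset a b).filter (fun x => x < t) ∪ (Nset a b).filter (fun x => x = t) := by
    ext x
    simp only [Finset.mem_filter, Finset.mem_union]
    constructor
    · rintro ⟨hx, hle⟩
      rcases eq_or_lt_of_le hle with h | h
      · exact Or.inr ⟨hx, h⟩
      · exact Or.inl ⟨hx, h⟩
    · rintro (⟨hx, hlt⟩ | ⟨hx, rfl⟩)
      · exact ⟨hx, le_of_lt hlt⟩
      · exact ⟨hx, le_refl _⟩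
  have hdisj : Disjoint ((Nset a b).filter (fun x => x < t))
      ((Nset a b).filter (fun x => x = t)) := by
    rw [Finset.disjoint_left]
    rintro x hx1 hx2
    simp only [Finset.mem_filter] at hx1 hx2
    exact absurd hx1.2 (by rw [hx2.2]; exact lt_irrefl t)
  rw [hsplit, Finset.card_union_of_disjoint hdisj, Finset.filter_eq']
  by_cases hN : t ∈ Nset a b
  · rw [if_pos hN, if_neg (mem_Nset.mp hN)]
    simp
  · rw [if_neg hN, if_pos (by by_contra h; exact hN (mem_Nset.mpr h))]
    simp

lemma claimC (a b : Fin n → ℕ)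
    (hs : ∀ t, Af a t = Af b t ∨ Af a t = Af b t + 1) :
    ∀ m (h : m < n), Af a ⟨m, h⟩ = Af b ⟨m, h⟩
      + ((Nset a b).filter (fun x => x ≤ (⟨m, h⟩ : Fin n))).card % 2 := by
  intro m
  induction m with
  | zero =>
    intro h
    have h1 := hs ⟨0, h⟩
    have h2 := card_le_eq a b (⟨0, h⟩ : Fin n)
    rw [filter_lt_zero a b h] at h2
    simp only [Finset.card_empty] at h2
    rw [Af_zero, Af_zero] at h1
    rw [h2]
    rw [Af_zero, Af_zero]
    by_cases hab : a ⟨0, h⟩ = b ⟨0, h⟩ <;> simp [hab] at h1 ⊢ <;> omega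
  | succ m ih =>
    intro h
    have hm : m < n := by omega
    have h1 := hs ⟨m + 1, h⟩
    have h2 := card_le_eq a b (⟨m + 1, h⟩ : Fin n)
    rw [filter_lt_succ a b m h] at h2
    have h3 := ih hm
    have h4 := Af_succ a m h
    have h5 := Af_succ b m h
    by_cases hab : a ⟨m + 1, h⟩ = b ⟨m + 1, h⟩ <;> simp [hab] at h2 <;> omega

lemma keyFlip (a b : Fin n → ℕ)
    (hs : ∀ t, Af a t = Af b t ∨ Af a t = Af b t + 1) (t : Fin n) :
    a t + ((Nset a b).filter (fun x => x < t)).card % 2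
      = b t + ((Nset a b).filter (fun x => x ≤ t)).card % 2 := by
  obtain ⟨m, hm⟩ := t
  have h2 := card_le_eq a b (⟨m, hm⟩ : Fin n)
  match m with
  | 0 =>
    have h1 := hs ⟨0, hm⟩
    rw [filter_lt_zero a b hm] at h2 ⊢
    simp only [Finset.card_empty] at h2 ⊢
    rw [Af_zero, Af_zero] at h1
    by_cases hab : a ⟨0, hm⟩ = b ⟨0, hm⟩
    · rw [if_pos hab] at h2; omega
    · rw [if_neg hab] at h2; omega
  | m + 1 =>
    have h1 := hs ⟨m + 1, hm⟩
    have h3 := claimC a b hs m (by omega)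
    have hC := claimC a b hs (m + 1) hm
    rw [filter_lt_succ a b m hm] at h2 ⊢
    have h4 := Af_succ a m hm
    have h5 := Af_succ b m hm
    by_cases hab : a ⟨m + 1, hm⟩ = b ⟨m + 1, hm⟩ <;> simp [hab] at h2 <;> omega

lemma card_filter_lt_orderEmb (s : Finset (Fin n)) {k : ℕ} (h : s.card = k) (j : Fin k) :
    (s.filter (fun x => x < s.orderEmbOfFin h j)).card = j.1 := by
  have himg : s.filter (fun x => x < s.orderEmbOfFin h j)
      = (Finset.Iio j).image (s.orderEmbOfFin h) := by
    ext x
    simp only [Finset.mem_filter, Finset.mem_image, Finset.mem_Iio]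
    constructor
    · rintro ⟨hxs, hxlt⟩
      have : x ∈ Set.range (s.orderEmbOfFin h) := by
        rw [Finset.range_orderEmbOfFin]; exact hxs
      obtain ⟨i, rfl⟩ := this
      exact ⟨i, (s.orderEmbOfFin h).strictMono.lt_iff_lt.mp hxlt, rfl⟩
    · rintro ⟨i, hij, rfl⟩
      exact ⟨Finset.orderEmbOfFin_mem s h i, (s.orderEmbOfFin h).strictMono hij⟩
  rw [himg, Finset.card_image_of_injective _ (s.orderEmbOfFin h).injective, Fin.card_Iio]


lemma flip_even (a b : Fin n → ℕ)
    (hs : ∀ t, Af a t = Af b t ∨ Af a t = Af b t + 1)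
    {kk : ℕ} (hk : (Nset a b).card = kk) (i : Fin kk) (hpar : i.1 % 2 = 0) :
    b ((Nset a b).orderEmbOfFin hk i) + 1 = a ((Nset a b).orderEmbOfFin hk i) := by
  obtain ⟨e, he⟩ : ∃ e, (Nset a b).orderEmbOfFin hk i = e := ⟨_, rfl⟩
  have hmem : e ∈ Nset a b := he ▸ Finset.orderEmbOfFin_mem _ hk i
  have hcard : ((Nset a b).filter (fun x => x < e)).card = i.1 := by
    rw [← he]; exact card_filter_lt_orderEmb _ hk i
  rw [he]
  have hne := mem_Nset.mp hmem
  have hflip := keyFlip a b hs e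
  have hle := card_le_eq a b e
  rw [if_neg hne] at hle
  omega

lemma flip_odd (a b : Fin n → ℕ)
    (hs : ∀ t, Af a t = Af b t ∨ Af a t = Af b t + 1)
    {kk : ℕ} (hk : (Nset a b).card = kk) (i : Fin kk) (hpar : i.1 % 2 = 1) :
    b ((Nset a b).orderEmbOfFin hk i) = a ((Nset a b).orderEmbOfFin hk i) + 1 := by
  obtain ⟨e, he⟩ : ∃ e, (Nset a b).orderEmbOfFin hk i = e := ⟨_, rfl⟩
  have hmem : e ∈ Nset a b := he ▸ Finset.orderEmbOfFin_mem _ hk i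
  have hcard : ((Nset a b).filter (fun x => x < e)).card = i.1 := by
    rw [← he]; exact card_filter_lt_orderEmb _ hk i
  rw [he]
  have hne := mem_Nset.mp hmem
  have hflip := keyFlip a b hs e
  have hle := card_le_eq a b e
  rw [if_neg hne] at hle
  omega

end Stmt2Aux

/-- For `a >_lex b` in `V_{n,d}`, the pair `(a,b)` is sorted iff condition (S) holds. -/
theorem stmt2 (n d : ℕ) (a b : Fin n → ℕ)
    (ha : ∑ i, a i = d) (hb : ∑ i, b i = d) (hlex : lexGT a b) :
    sortedPair a b ↔ condS a b := by
  classical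
  rw [Stmt2Aux.sortedPair_iff]
  constructor
  · intro hs
    obtain ⟨i0, -, -⟩ := hlex
    have hn : 0 < n := lt_of_le_of_lt (Nat.zero_le _) i0.2
    set N := Stmt2Aux.Nset a b with hNdef
    -- the total number of disagreement positions is even
    have huniv : Finset.Iic (⟨n - 1, by omega⟩ : Fin n) = Finset.univ := by
      ext x
      simp only [Finset.mem_Iic, Finset.mem_univ, iff_true, Fin.le_def]
      have := x.2
      omega
    have hfilterall : N.filter (fun x => x ≤ (⟨n - 1, by omega⟩ : Fin n)) = N := by
      apply Finset.filter_true_of_mem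
      intro x _
      show x.1 ≤ n - 1
      have := x.2
      omega
    have hC := Stmt2Aux.claimC a b hs (n - 1) (by omega)
    rw [hfilterall] at hC
    have hAa : Stmt2Aux.Af a ⟨n - 1, by omega⟩ = d := by
      show (∑ i ∈ Finset.Iic _, a i) = d
      rw [huniv]; exact ha
    have hAb : Stmt2Aux.Af b ⟨n - 1, by omega⟩ = d := by
      show (∑ i ∈ Finset.Iic _, b i) = d
      rw [huniv]; exact hb
    have heven : N.card % 2 = 0 := by omega
    set k := N.card / 2 with hkdef
    have hk : N.card = 2 * k := by omega
    refine ⟨k, fun j => N.orderEmbOfFin hk j, ?_, ?_, ?_⟩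
    · exact fun j1 j2 h => (N.orderEmbOfFin hk).strictMono h
    · intro j
      constructor
      · exact Stmt2Aux.flip_even a b hs hk ⟨2 * j.1, by have := j.2; omega⟩
          (show 2 * j.1 % 2 = 0 by omega)
      · exact Stmt2Aux.flip_odd a b hs hk ⟨2 * j.1 + 1, by have := j.2; omega⟩
          (show (2 * j.1 + 1) % 2 = 1 by omega)
    · intro t ht
      by_cases h : a t = b t
      · exact h.symm
      · exfalso
        have htN : t ∈ N := Stmt2Aux.mem_Nset.mpr h
        have : t ∈ Set.range (N.orderEmbOfFin hk) := by
          rw [Finset.range_orderEmbOfFin]; exact htN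
        obtain ⟨j, hj⟩ := this
        exact ht j hj
  · rintro ⟨k, f, hmono, hvals, hrest⟩
    intro t
    set fe : Fin k → Fin n := fun j => f ⟨2 * j.1, by have := j.2; omega⟩ with hfe
    set fo : Fin k → Fin n := fun j => f ⟨2 * j.1 + 1, by have := j.2; omega⟩ with hfo
    have hfe_lt_fo : ∀ j, fe j < fo j := fun j => hmono (Fin.mk_lt_mk.mpr (by omega))
    have hfe_inj : Function.Injective fe := by
      intro j1 j2 h
      have := hmono.injective h
      rw [Fin.ext_iff] at this ⊢
      simp only [Fin.ext_iff] at this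
      omega
    have hfo_inj : Function.Injective fo := by
      intro j1 j2 h
      have := hmono.injective h
      rw [Fin.ext_iff] at this ⊢
      simp only [Fin.ext_iff] at this
      omega
    set evens := Finset.univ.image fe with hevens
    set odds := Finset.univ.image fo with hodds
    have hpoint : ∀ x : Fin n,
        a x + (if x ∈ odds then 1 else 0) = b x + (if x ∈ evens then 1 else 0) := by
      intro x
      by_cases he : x ∈ evens
      · obtain ⟨j, -, hj⟩ := Finset.mem_image.mp he
        have hon : x ∉ odds := by
          intro ho
          obtain ⟨j', -, hj'⟩ := Finset.mem_image.mp ho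
          have : fe j = fo j' := by rw [hj, hj']
          have := hmono.injective this
          simp only [Fin.ext_iff] at this
          omega
        have hval : b (fe j) + 1 = a (fe j) := (hvals j).1
        rw [hj] at hval
        rw [if_pos he, if_neg hon]
        omega
      · by_cases ho : x ∈ odds
        · obtain ⟨j, -, hj⟩ := Finset.mem_image.mp ho
          have hval : b (fo j) = a (fo j) + 1 := (hvals j).2
          rw [hj] at hval
          rw [if_pos ho, if_neg he]
          omega
        · have hx : ∀ j : Fin (2 * k), f j ≠ x := by
            intro j hj
            rcases Nat.even_or_odd j.1 with ⟨m, hm⟩ | ⟨m, hm⟩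
            · apply he
              refine Finset.mem_image.mpr ⟨⟨m, by have := j.2; omega⟩, Finset.mem_univ _, ?_⟩
              show f ⟨2 * m, _⟩ = x
              rw [← hj]
              congr 1
              exact Fin.ext (by simp; omega)
            · apply ho
              refine Finset.mem_image.mpr ⟨⟨m, by have := j.2; omega⟩, Finset.mem_univ _, ?_⟩
              show f ⟨2 * m + 1, _⟩ = x
              rw [← hj]
              congr 1
              exact Fin.ext (by simp; omega)
          have := hrest x hx
          rw [if_neg he, if_neg ho]
          omega
    have hsum : Stmt2Aux.Af a t + (Finset.Iic t ∩ odds).card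
        = Stmt2Aux.Af b t + (Finset.Iic t ∩ evens).card := by
      have h1 : (∑ x ∈ Finset.Iic t, (a x + (if x ∈ odds then 1 else 0)))
          = ∑ x ∈ Finset.Iic t, (b x + (if x ∈ evens then 1 else 0)) :=
        Finset.sum_congr rfl (fun x _ => hpoint x)
      rw [Finset.sum_add_distrib, Finset.sum_add_distrib, Finset.sum_ite_mem,
        Finset.sum_ite_mem, Finset.sum_const, Finset.sum_const] at h1
      simpa [Stmt2Aux.Af] using h1
    set JE := Finset.univ.filter (fun j : Fin k => fe j ≤ t) with hJE
    set JO := Finset.univ.filter (fun j : Fin k => fo j ≤ t) with hJO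
    have hEcard : (Finset.Iic t ∩ evens).card = JE.card := by
      have himg : Finset.Iic t ∩ evens = JE.image fe := by
        ext x
        simp only [Finset.mem_inter, Finset.mem_Iic, Finset.mem_image, Finset.mem_filter,
          Finset.mem_univ, true_and, hevens, hJE]
        constructor
        · rintro ⟨hxt, j, -, rfl⟩
          exact ⟨j, hxt, rfl⟩
        · rintro ⟨j, hjt, rfl⟩
          exact ⟨hjt, j, rfl⟩
      rw [himg, Finset.card_image_of_injective _ hfe_inj]
    have hOcard : (Finset.Iic t ∩ odds).card = JO.card := by
      have himg : Finset.Iic t ∩ odds = JO.image fo := by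
        ext x
        simp only [Finset.mem_inter, Finset.mem_Iic, Finset.mem_image, Finset.mem_filter,
          Finset.mem_univ, true_and, hodds, hJO]
        constructor
        · rintro ⟨hxt, j, -, rfl⟩
          exact ⟨j, hxt, rfl⟩
        · rintro ⟨j, hjt, rfl⟩
          exact ⟨hjt, j, rfl⟩
      rw [himg, Finset.card_image_of_injective _ hfo_inj]
    have hsub : JO ⊆ JE := by
      intro j hj
      simp only [Finset.mem_filter, Finset.mem_univ, true_and, hJO, hJE] at hj ⊢
      exact le_of_lt (lt_of_lt_of_le (hfe_lt_fo j) hj)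
    have hle1 : JO.card ≤ JE.card := Finset.card_le_card hsub
    have hle2 : JE.card ≤ JO.card + 1 := by
      rcases JE.eq_empty_or_nonempty with hemp | hne
      · simp [hemp]
      · set j0 := JE.min' hne with hj0
        have herase : (JE.erase j0).card ≤ JO.card := by
          apply Finset.card_le_card_of_injOn (fun j => (⟨j.1 - 1, by have := j.2; omega⟩ : Fin k))
          · intro j hj
            have hj' := Finset.mem_of_mem_erase hj
            have hjne := Finset.ne_of_mem_erase hj
            have hj0le : j0 ≤ j := JE.min'_le j hj'
            have hpos : 1 ≤ j.1 := by
              have : j0 < j := lt_of_le_of_ne hj0le (Ne.symm hjne)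
              rw [Fin.lt_def] at this
              omega
            simp only [Finset.mem_filter, Finset.mem_univ, true_and, hJE] at hj'
            simp only [Finset.mem_filter, Finset.mem_univ, true_and, hJO]
            have hlt : fo ⟨j.1 - 1, by have := j.2; omega⟩ < fe j := by
              apply hmono
              rw [Fin.lt_def]
              show 2 * (j.1 - 1) + 1 < 2 * j.1
              omega
            exact Finset.mem_coe.mpr (Finset.mem_filter.mpr ⟨Finset.mem_univ _, le_of_lt (lt_of_lt_of_le hlt hj')⟩)
          · intro j1 hj1 j2 hj2 hhe
            have hp1 : 1 ≤ j1.1 := by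
              have h1' := Finset.mem_of_mem_erase hj1
              have : j0 < j1 := lt_of_le_of_ne (JE.min'_le j1 h1')
                (Ne.symm (Finset.ne_of_mem_erase hj1))
              rw [Fin.lt_def] at this
              omega
            have hp2 : 1 ≤ j2.1 := by
              have h2' := Finset.mem_of_mem_erase hj2
              have : j0 < j2 := lt_of_le_of_ne (JE.min'_le j2 h2')
                (Ne.symm (Finset.ne_of_mem_erase hj2))
              rw [Fin.lt_def] at this
              omega
            simp only [Fin.ext_iff] at hhe ⊢
            omega
        have hcerase : (JE.erase j0).card = JE.card - 1 :=
          Finset.card_erase_of_mem (JE.min'_mem hne)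
        have hcpos : 1 ≤ JE.card := Finset.card_pos.mpr hne
        omega
    omega
end

section
/- If {a >_lex b >_lex c} is a sorted triple in V_{n,d} (each pair among (a,b), (b,c), (a,c) is sorted), then the sorting signature sets satisfy Δ(a,c) = Δ(a,b) ⊔ Δ(b,c), i.e., Δ(a,b) and Δ(b,c) are disjoint and their union equals Δ(a,c). -/
open Finset

theorem sortedPair.sum_Iic_eq_or_eq_add_one {n : ℕ} {u v : Fin n → ℕ} (h : sortedPair u v)
    (t : Fin n) :
    ∑ i ∈ Iic t, u i = ∑ i ∈ Iic t, v i ∨ ∑ i ∈ Iic t, u i = ∑ i ∈ Iic t, v i + 1 := by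
  have := h t
  rw [sum_add_distrib] at this
  omega

theorem mem_sigSet {n : ℕ} {u v : Fin n → ℕ} {t : Fin n} :
    t ∈ sigSet u v ↔ ∑ i ∈ Iic t, v i + 1 = ∑ i ∈ Iic t, u i := by
  simp [sigSet]

section SortedTriple

variable {n : ℕ} {a b c : Fin n → ℕ}

theorem disjoint_sigSet_of_sortedPair (sac : sortedPair a c) :
    Disjoint (sigSet a b) (sigSet b c) := by
  refine disjoint_left.2 fun t hab hbc => ?_
  rw [mem_sigSet] at hab hbc
  have hac := sac.sum_Iic_eq_or_eq_add_one t
  omega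

theorem sigSet_union_sigSet_of_sortedPair (sab : sortedPair a b) (sbc : sortedPair b c)
    (sac : sortedPair a c) : sigSet a b ∪ sigSet b c = sigSet a c := by
  ext t
  rw [mem_union, mem_sigSet, mem_sigSet, mem_sigSet]
  have hab := sab.sum_Iic_eq_or_eq_add_one t
  have hbc := sbc.sum_Iic_eq_or_eq_add_one t
  have hac := sac.sum_Iic_eq_or_eq_add_one t
  omega

end SortedTriple

theorem stmt4_general (n : ℕ) (a b c : Fin n → ℕ)
    (sab : sortedPair a b) (sbc : sortedPair b c) (sac : sortedPair a c) :
    Disjoint (sigSet a b) (sigSet b c) ∧ sigSet a b ∪ sigSet b c = sigSet a c :=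
  ⟨disjoint_sigSet_of_sortedPair sac, sigSet_union_sigSet_of_sortedPair sab sbc sac⟩

/-- If `{a >_lex b >_lex c}` is a sorted triple in `V_{n,d}`, then
`Δ(a,c) = Δ(a,b) ⊔ Δ(b,c)`. -/
theorem stmt4 (n d : ℕ) (a b c : Fin n → ℕ)
    (ha : ∑ i, a i = d) (hb : ∑ i, b i = d) (hc : ∑ i, c i = d)
    (hab : lexGT a b) (hbc : lexGT b c)
    (sab : sortedPair a b) (sbc : sortedPair b c) (sac : sortedPair a c) :
    Disjoint (sigSet a b) (sigSet b c) ∧ sigSet a b ∪ sigSet b c = sigSet a c :=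
  stmt4_general n a b c sab sbc sac
end

section
/- If {a >_lex b >_lex d} and {b >_lex c >_lex d} are both sorted triples (cliques in the sorting graph 𝒢), then {a >_lex b >_lex c >_lex d} is also a clique in 𝒢, i.e., the pair (a,c) is also sorted. -/
/-!
Sortedness of `(x, y)` says that at every position the prefix sum of `x` exceeds that of `y`
by `0` or `1`. For `(a, c)` the lower bound passes through `b` (`c ≤ b ≤ a`) and the upper
bound through `e` (`a ≤ e + 1 ≤ c + 1`).
-/

theorem lexGT_trans {n : ℕ} {a b c : Fin n → ℕ} (hab : lexGT a b) (hbc : lexGT b c) :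
    lexGT a c := by
  obtain ⟨i, hi, hlt⟩ := hab
  obtain ⟨j, hj, hlt'⟩ := hbc
  rcases lt_trichotomy i j with h | rfl | h
  · exact ⟨i, fun k hk => (hi k hk).trans (hj k (hk.trans h)), hj i h ▸ hlt⟩
  · exact ⟨i, fun k hk => (hi k hk).trans (hj k hk), hlt'.trans hlt⟩
  · exact ⟨j, fun k hk => (hi k (hk.trans h)).trans (hj k hk), hi j h ▸ hlt'⟩

theorem sortedPair_iff {n : ℕ} {a b : Fin n → ℕ} :
    sortedPair a b ↔ ∀ t : Fin n, ∑ i ∈ Finset.Iic t, b i ≤ ∑ i ∈ Finset.Iic t, a i ∧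
      ∑ i ∈ Finset.Iic t, a i ≤ ∑ i ∈ Finset.Iic t, b i + 1 :=
  forall_congr' fun t => by rw [Finset.sum_add_distrib]; omega

theorem sortedPair_trans_of_common_lower {n : ℕ} {a b c e : Fin n → ℕ}
    (hab : sortedPair a b) (hbc : sortedPair b c) (hae : sortedPair a e)
    (hce : sortedPair c e) : sortedPair a c := by
  rw [sortedPair_iff] at *
  intro t
  obtain ⟨hba, -⟩ := hab t
  obtain ⟨hcb, -⟩ := hbc t
  obtain ⟨-, hae⟩ := hae t
  obtain ⟨hec, -⟩ := hce t
  exact ⟨hcb.trans hba, hae.trans (Nat.add_le_add_right hec 1)⟩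

theorem stmt5_general (n : ℕ) (a b c e : Fin n → ℕ)
    (hab : lexGT a b) (hbc : lexGT b c)
    (sab : sortedPair a b) (sae : sortedPair a e)
    (sbc : sortedPair b c) (sce : sortedPair c e) :
    lexGT a c ∧ sortedPair a c :=
  ⟨lexGT_trans hab hbc, sortedPair_trans_of_common_lower sab sbc sae sce⟩

/-- If `{a >_lex b >_lex e}` and `{b >_lex c >_lex e}` are cliques in the sorting
graph `𝒢`, then `{a >_lex b >_lex c >_lex e}` is also a clique, i.e. `(a,c)` is
also a sorted pair. -/
theorem stmt5 (n d : ℕ) (α : Fin n → ℕ) (a b c e : Fin n → ℕ)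
    (ha : a ∈ VT n d α) (hb : b ∈ VT n d α) (hc : c ∈ VT n d α) (he : e ∈ VT n d α)
    (hab : lexGT a b) (hbc : lexGT b c) (hce : lexGT c e)
    (sab : sortedPair a b) (sbe : sortedPair b e) (sae : sortedPair a e)
    (sbc : sortedPair b c) (sce : sortedPair c e) :
    lexGT a c ∧ sortedPair a c :=
  stmt5_general n a b c e hab hbc sab sae sbc sce
end

section
/- Let A = (a^1,…,a^n) and B = (b^1,…,b^n) be tuples of elements of ℤ^n with a^1 = b^1 and a^n = b^n, with signatures sgn(A) = (s_1,…,s_{n−1}) and sgn(B) = (t_1,…,t_{n−1}) (permutations of [n−1] recording Δ(a^i,a^{i+1}) = [s_i, s_i + 1) and likewise for B). Then for k ∈ [n−2], sgn(B) = (s_1,…,s_{k−1}, s_{k+1}, s_k, s_{k+2},…,s_{n−1}) if and only if the difference set {i : a^i ≠ b^i} equals {k+1}. -/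
private lemma vinj {n : ℕ} {x y : Fin (n + 1)}
    (h : (Pi.single x.succ 1 - Pi.single x.castSucc 1 : Fin (n + 2) → ℤ)
       = Pi.single y.succ 1 - Pi.single y.castSucc 1) : x = y := by
  have h1 := congrFun h x.castSucc
  simp only [Pi.sub_apply, Pi.single_apply] at h1
  by_contra hne
  have h2 : x.castSucc ≠ y.castSucc := fun hc => hne (Fin.castSucc_injective _ hc)
  rw [if_neg h2] at h1
  split_ifs at h1 with hc <;> first | omega | exact (Fin.castSucc_lt_succ : x.castSucc < x.succ).ne hc

private lemma step {m : ℕ} {A B : Fin (m + 2) → (Fin (m + 2) → ℤ)}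
    {s t : Fin (m + 1) → Fin (m + 1)}
    (hA : ∀ i : Fin (m + 1),
      A i.succ = A i.castSucc - Pi.single ((s i).castSucc) 1 + Pi.single ((s i).succ) 1)
    (hB : ∀ i : Fin (m + 1),
      B i.succ = B i.castSucc - Pi.single ((t i).castSucc) 1 + Pi.single ((t i).succ) 1)
    (j : Fin (m + 1)) (h : A j.castSucc = B j.castSucc) :
    A j.succ = B j.succ ↔ s j = t j := by
  rw [hA j, hB j, h]
  constructor
  · intro he
    apply vinj (n := m)
    linear_combination he
  · intro he; rw [he]

private lemma step' {m : ℕ} {A B : Fin (m + 2) → (Fin (m + 2) → ℤ)}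
    {s t : Fin (m + 1) → Fin (m + 1)}
    (hA : ∀ i : Fin (m + 1),
      A i.succ = A i.castSucc - Pi.single ((s i).castSucc) 1 + Pi.single ((s i).succ) 1)
    (hB : ∀ i : Fin (m + 1),
      B i.succ = B i.castSucc - Pi.single ((t i).castSucc) 1 + Pi.single ((t i).succ) 1)
    (j : Fin (m + 1)) (h : A j.succ = B j.succ) (hst : s j = t j) :
    A j.castSucc = B j.castSucc := by
  have hBj := hB j
  rw [← hst] at hBj
  linear_combination h - hA j + hBj

/-- Let `A, B : Fin (m+2) → ℤ^(m+2)` (with `n = m + 2 ≥ 3`) be tuples with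
`a^1 = b^1`, `a^n = b^n`, and signatures `s`, `t` (permutations of `[n-1]`
recording the consecutive jumps).  For `k ∈ [n-2]`:
`sgn(B) = (s_1,…,s_{k-1}, s_{k+1}, s_k, s_{k+2},…,s_{n-1})` iff
`{i : a^i ≠ b^i} = {k+1}`. -/
theorem stmt10 (m : ℕ) (hm : 1 ≤ m)
    (A B : Fin (m + 2) → (Fin (m + 2) → ℤ))
    (s t : Fin (m + 1) → Fin (m + 1))
    (hs : Function.Bijective s) (ht : Function.Bijective t)
    (hA : ∀ i : Fin (m + 1),
      A i.succ = A i.castSucc - Pi.single ((s i).castSucc) 1 + Pi.single ((s i).succ) 1)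
    (hB : ∀ i : Fin (m + 1),
      B i.succ = B i.castSucc - Pi.single ((t i).castSucc) 1 + Pi.single ((t i).succ) 1)
    (h1 : A 0 = B 0) (hlast : A (Fin.last (m + 1)) = B (Fin.last (m + 1)))
    (k : Fin (m + 1)) (hk : k.1 + 1 < m + 1) :
    (t = fun i => if i = k then s ⟨k.1 + 1, hk⟩
      else if i = ⟨k.1 + 1, hk⟩ then s k else s i)
      ↔ {i : Fin (m + 2) | A i ≠ B i} = {(⟨k.1 + 1, by omega⟩ : Fin (m + 2))} := by
  constructor
  · intro hdef
    have hne1 : (⟨k.1 + 1, hk⟩ : Fin (m + 1)) ≠ k := by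
      simp only [ne_eq, Fin.ext_iff, Fin.val_mk]; omega
    have htk : t k = s ⟨k.1 + 1, hk⟩ := by rw [hdef]; simp
    have hts : ∀ j : Fin (m + 1), j ≠ k → j ≠ ⟨k.1 + 1, hk⟩ → t j = s j := by
      intro j hj1 hj2; rw [hdef]; simp [hj1, hj2]
    have fwd : ∀ p : ℕ, ∀ hp : p ≤ k.1, A ⟨p, by omega⟩ = B ⟨p, by omega⟩ := by
      intro p
      induction p with
      | zero => intro _; exact h1
      | succ q ih =>
        intro hp
        have hq : q < m + 1 := by omega
        have hAB : A ((⟨q, hq⟩ : Fin (m + 1)).castSucc) = B ((⟨q, hq⟩ : Fin (m + 1)).castSucc) :=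
          ih (by omega)
        have h2 : s ⟨q, hq⟩ = t ⟨q, hq⟩ :=
          (hts ⟨q, hq⟩ (by simp only [ne_eq, Fin.ext_iff, Fin.val_mk]; omega)
            (by simp only [ne_eq, Fin.ext_iff, Fin.val_mk]; omega)).symm
        exact (step hA hB ⟨q, hq⟩ hAB).2 h2
    have bwd : ∀ d p (hpd : p + d = m + 1) (hpk : k.1 + 2 ≤ p), A ⟨p, by omega⟩ = B ⟨p, by omega⟩ := by
      intro d
      induction d with
      | zero =>
        intro p hpd _
        have hp : p = m + 1 := by omega
        subst hp
        exact hlast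
      | succ d ih =>
        intro p hpd hpk
        have hp : p < m + 1 := by omega
        have hsucc : A ⟨p + 1, by omega⟩ = B ⟨p + 1, by omega⟩ := ih (p + 1) (by omega) (by omega)
        have h2 : s ⟨p, hp⟩ = t ⟨p, hp⟩ :=
          (hts ⟨p, hp⟩ (by simp only [ne_eq, Fin.ext_iff, Fin.val_mk]; omega)
            (by simp only [ne_eq, Fin.ext_iff, Fin.val_mk]; omega)).symm
        exact step' hA hB ⟨p, hp⟩ hsucc h2
    have hmid : A ⟨k.1 + 1, by omega⟩ ≠ B ⟨k.1 + 1, by omega⟩ := by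
      have hAB : A k.castSucc = B k.castSucc := fwd k.1 le_rfl
      intro hcon
      have h2 : s k = t k := (step hA hB k hAB).1 hcon
      rw [htk] at h2
      exact hne1 (hs.injective h2.symm)
    ext i
    simp only [Set.mem_setOf_eq, Set.mem_singleton_iff]
    constructor
    · intro hne
      by_contra hik
      rcases lt_or_ge i.1 (k.1 + 1) with hlt | hge
      · exact hne (fwd i.1 (by omega))
      · have hik' : i.1 ≠ k.1 + 1 := by
          intro hc; exact hik (Fin.ext hc)
        exact hne (bwd (m + 1 - i.1) i.1 (by omega) (by omega))
    · intro hi; rw [hi]; exact hmid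
  · intro hset
    have hmem : ∀ i : Fin (m + 2), A i ≠ B i ↔ i = ⟨k.1 + 1, by omega⟩ := by
      intro i
      rw [Set.ext_iff] at hset
      simpa using hset i
    have heq : ∀ i : Fin (m + 2), i ≠ ⟨k.1 + 1, by omega⟩ → A i = B i := by
      intro i h
      by_contra hc
      exact h ((hmem i).1 hc)
    have hne : A ⟨k.1 + 1, by omega⟩ ≠ B ⟨k.1 + 1, by omega⟩ := (hmem _).2 rfl
    have hts : ∀ j : Fin (m + 1), j ≠ k → j ≠ ⟨k.1 + 1, hk⟩ → s j = t j := by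
      intro j hjk hjk1
      have hj1 : j.1 ≠ k.1 + 1 := fun hc => hjk1 (Fin.ext hc)
      have hj2 : j.1 ≠ k.1 := fun hc => hjk (Fin.ext hc)
      have hc : A j.castSucc = B j.castSucc :=
        heq _ (by simp only [ne_eq, Fin.ext_iff, Fin.coe_castSucc]; omega)
      have hsu : A j.succ = B j.succ :=
        heq _ (by simp only [ne_eq, Fin.ext_iff, Fin.val_succ]; omega)
      exact (step hA hB j hc).1 hsu
    have hsk : s k ≠ t k := by
      intro hcon
      have hc : A k.castSucc = B k.castSucc :=
        heq _ (by simp only [ne_eq, Fin.ext_iff, Fin.coe_castSucc]; omega)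
      exact hne ((step hA hB k hc).2 hcon)
    have htk : t k = s ⟨k.1 + 1, hk⟩ := by
      obtain ⟨j, hj⟩ := hs.surjective (t k)
      rcases eq_or_ne j k with rfl | hjk
      · exact absurd hj hsk
      rcases eq_or_ne j (⟨k.1 + 1, hk⟩ : Fin (m + 1)) with rfl | hjk1
      · exact hj.symm
      · rw [hts j hjk hjk1] at hj
        exact absurd (ht.injective hj) hjk
    have htk1 : t ⟨k.1 + 1, hk⟩ = s k := by
      obtain ⟨j, hj⟩ := hs.surjective (t ⟨k.1 + 1, hk⟩)
      rcases eq_or_ne j k with rfl | hjk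
      · exact hj.symm
      rcases eq_or_ne j (⟨k.1 + 1, hk⟩ : Fin (m + 1)) with rfl | hjk1
      · have h2 := ht.injective (htk.trans hj)
        exact absurd h2.symm (by simp only [ne_eq, Fin.ext_iff, Fin.val_mk]; omega)
      · rw [hts j hjk hjk1] at hj
        exact absurd (ht.injective hj) hjk1
    funext j
    by_cases hj1 : j = k
    · subst hj1; simpa using htk
    by_cases hj2 : j = (⟨k.1 + 1, hk⟩ : Fin (m + 1))
    · subst hj2
      rw [if_neg (by simp only [ne_eq, Fin.ext_iff, Fin.val_mk]; omega), if_pos rfl]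
      exact htk1
    · rw [if_neg hj1, if_neg hj2]
      exact (hts j hj1 hj2).symm
end

section
/- Define rank(a) = ∑_{j=1}^{n−1} (a_j − η_j)(n − j) for a ∈ V_{n,d}^α, where η is the lex-smallest element of V_{n,d}^α. If a >_lex b is a sorted pair (so Δ(a,b) exists), then rank(a) = rank(b) + length(Δ(a,b)). -/
/-! Passing from `a` to `b` changes the rank by `∑ⱼ (aⱼ - bⱼ)(n - 1 - j)`, in which `η` cancels.
Since `a` and `b` have the same coordinate sum, Abel summation turns this into `∑ₜ (Aₜ - Bₜ)`,
where `Aₜ`, `Bₜ` are the prefix sums of `a`, `b` up to `t`. Sortedness says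
`Aₜ = ⌈(Aₜ + Bₜ)/2⌉`, so each such difference is `0` or `1`, and it is `1` exactly at the
positions of `Δ(a,b)`. -/

open Finset

theorem Fin.sum_sum_Iic {M : Type*} [AddCommMonoid M] {n : ℕ} (f : Fin n → M) :
    ∑ t : Fin n, ∑ i ∈ Iic t, f i = ∑ i : Fin n, (n - i : ℕ) • f i := by
  rw [sum_comm' (t' := univ) (s' := fun i => Ici i) fun _ _ => by simp]
  simp only [Finset.sum_const, Fin.card_Ici]

theorem Fin.sum_mul_sub_one_sub_eq_sum_sum_Iic {R : Type*} [CommRing R] {n : ℕ} (f : Fin n → R)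
    (hf : ∑ i, f i = 0) :
    ∑ j : Fin n, f j * ((n : R) - 1 - (j : ℕ)) = ∑ t : Fin n, ∑ i ∈ Iic t, f i := by
  have hweight (j : Fin n) : f j * ((n : R) - 1 - (j : ℕ)) = (n - j : ℕ) • f j - f j := by
    rw [nsmul_eq_mul, Nat.cast_sub j.2.le]
    ring
  simp_rw [hweight, sum_sub_distrib, hf, sub_zero, Fin.sum_sum_Iic]

namespace sortedPair

variable {n : ℕ} {a b : Fin n → ℕ}

theorem prefix_sum_eq (h : sortedPair a b) (t : Fin n) :
    ∑ i ∈ Iic t, a i = ∑ i ∈ Iic t, b i + (∑ i ∈ Iic t, (a i + b i)) % 2 := by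
  have := h t
  rw [sum_add_distrib] at this ⊢
  omega

theorem card_sigSet (h : sortedPair a b) :
    ((sigSet a b).card : ℤ) = ∑ t : Fin n, ∑ i ∈ Iic t, ((a i : ℤ) - b i) := by
  rw [sigSet, card_filter, Nat.cast_sum]
  refine sum_congr rfl fun t _ => ?_
  have hdiff := h.prefix_sum_eq t
  have hmod := Nat.mod_lt (∑ i ∈ Iic t, (a i + b i)) two_pos
  rw [sum_sub_distrib, ← Nat.cast_sum, ← Nat.cast_sum]
  split_ifs <;> omega

end sortedPair

/-- With `rank(a) = ∑_{j=1}^{n-1} (a_j - η_j)(n - j)`, if `a >_lex b` is a sorted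
pair in `V_{n,d}^α` then `rank(a) = rank(b) + length(Δ(a,b))`. -/
theorem stmt13 (n d : ℕ) (α : Fin n → ℕ)
    (η : Fin n → ℕ)
    (a b : Fin n → ℕ) (ha : a ∈ VT n d α) (hb : b ∈ VT n d α)
    (hsort : sortedPair a b) :
    (∑ j : Fin n, ((a j : ℤ) - (η j : ℤ)) * ((n : ℤ) - 1 - (j.1 : ℤ)))
      = (∑ j : Fin n, ((b j : ℤ) - (η j : ℤ)) * ((n : ℤ) - 1 - (j.1 : ℤ)))
        + ((sigSet a b).card : ℤ) := by
  have hsum : ∑ i, ((a i : ℤ) - b i) = 0 := by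
    rw [sum_sub_distrib, ← Nat.cast_sum, ← Nat.cast_sum, ha.1, hb.1, sub_self]
  rw [hsort.card_sigSet, ← Fin.sum_mul_sub_one_sub_eq_sum_sum_Iic _ hsum, ← sub_eq_iff_eq_add',
    ← sum_sub_distrib]
  exact sum_congr rfl fun j _ => by ring
end

section
/- For every a ∈ V_{n,d}^α with a ≠ η (the lex-smallest element), there exists b ∈ V_{n,d}^α with a >_lex b ≥_lex η such that (a,b) is sorted and length(Δ(a,b)) = 1. Consequently rank(a) ∈ ℕ and there is a chain a = b^0 >_lex b^1 >_lex ⋯ >_lex b^m = η with each consecutive pair sorted of signature-length 1. -/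
/-!
The greedy tuple `η` fills coordinates from the right, so its suffix sums are
`min (∑_{j > i} α j) d`, the largest possible in `V_{n,d}^α`; equivalently every `a ∈ V_{n,d}^α`
dominates `η` in prefix sums. This forces `a ≥_lex η`, and since Abel summation writes `rank a`
as the sum of the prefix-sum excesses of `a` over `η`, also `rank a ≥ 0`.

If `a ≠ η`, let `i` be the first index with `a i > η i`. Some later coordinate of `a` is below its
bound, for otherwise the suffix of `a` after `i` would be at least that of `η` while its prefix up
to `i` is larger. As every `α j ≥ 1`, walking right from `i` yields adjacent positions `i' ⋖ j`
with `a i' > 0` and `a j < α j`. Moving one unit from `i'` to `j` lowers the prefix sum at `i'`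
by one and no other, so the pair is sorted with `Δ = {i'}` and the result is lex-smaller.
Lex order on `ℕ^n` is well-founded, so iterating these steps reaches `η`.
-/

open Finset

theorem Finset.sum_Iic_add_sum_Ioi {ι M : Type*} [LinearOrder ι] [Fintype ι]
    [LocallyFiniteOrderBot ι] [LocallyFiniteOrderTop ι] [AddCommMonoid M] (f : ι → M) (t : ι) :
    ∑ i ∈ Iic t, f i + ∑ i ∈ Ioi t, f i = ∑ i, f i := by
  rw [← filter_ge_eq_Iic, ← filter_lt_eq_Ioi, ← sum_filter_add_sum_filter_not univ (· ≤ t)]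
  simp only [not_le]

theorem Finset.sum_Iic_lt_sum_Iic {ι M : Type*} [PartialOrder ι] [LocallyFiniteOrderBot ι]
    [AddCommMonoid M] [PartialOrder M] [IsOrderedCancelAddMonoid M] {a b : ι → M} {i : ι}
    (heq : ∀ j < i, a j = b j) (hi : b i < a i) :
    ∑ j ∈ Iic i, b j < ∑ j ∈ Iic i, a j := by
  rw [← sum_Iio_add_eq_sum_Iic, ← sum_Iio_add_eq_sum_Iic,
    sum_congr rfl fun j hj => heq j (mem_Iio.1 hj)]
  exact (add_lt_add_iff_left _).2 hi

theorem Fin.sum_sum_Iic_eq {R : Type*} [CommRing R] {n : ℕ} (f : Fin n → R) :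
    ∑ t, ∑ j ∈ Iic t, f j = ∑ j, f j * (n - j) := by
  rw [sum_comm' (t' := univ) (s' := Ici) (by simp)]
  refine sum_congr rfl fun j _ => ?_
  rw [Finset.sum_const, Fin.card_Ici, nsmul_eq_mul, Nat.cast_sub j.is_lt.le, mul_comm]

theorem exists_covBy_pos_lt {ι : Type*} [LinearOrder ι] [WellFoundedGT ι] [IsStronglyAtomic ι]
    {a α : ι → ℕ} (hα : ∀ k, 0 < α k) {i k : ι} (hik : i < k) (hai : 0 < a i)
    (hak : a k < α k) : ∃ i' j, i' ⋖ j ∧ 0 < a i' ∧ a j < α j := by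
  induction i using WellFoundedGT.induction with
  | _ i ih =>
  obtain ⟨j, hij, hjk⟩ := exists_covBy_le_of_lt hik
  by_cases haj : a j < α j
  · exact ⟨i, j, hij, hai, haj⟩
  · have hjk : j < k := hjk.lt_of_ne (by rintro rfl; exact haj hak)
    exact ih j hij.lt hjk ((hα j).trans_le (not_lt.1 haj))

theorem WellFounded.exists_fin_chain {X : Type*} {r R : X → X → Prop} {P : X → Prop}
    (hr : WellFounded r) {z : X} (hstep : ∀ a, P a → a ≠ z → ∃ b, P b ∧ r b a ∧ R a b)
    {a : X} (ha : P a) :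
    ∃ (m : ℕ) (c : Fin (m + 1) → X), c 0 = a ∧ c (Fin.last m) = z ∧ (∀ i, P (c i)) ∧
      ∀ i : Fin m, R (c i.castSucc) (c i.succ) := by
  induction a using hr.induction with
  | _ a ih =>
  by_cases haz : a = z
  · exact ⟨0, fun _ => a, rfl, haz, fun _ => ha, Fin.elim0⟩
  obtain ⟨b, hb, hba, hab⟩ := hstep a ha haz
  obtain ⟨m, c, hc0, hcz, hcP, hcR⟩ := ih b hba hb
  refine ⟨m + 1, Fin.cons a c, rfl, by simpa [← Fin.succ_last] using hcz,
    Fin.cases ha hcP, Fin.cases (by simpa [hc0] using hab) fun i => ?_⟩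
  simpa [← Fin.succ_castSucc] using hcR i

variable {n d : ℕ}

theorem lexGT_iff_toLex_lt {a b : Fin n → ℕ} : lexGT a b ↔ toLex b < toLex a :=
  exists_congr fun _ => and_congr_left' <| forall₂_congr fun _ _ => eq_comm

theorem sortedPair_of_sum_Iic {a b : Fin n → ℕ}
    (h : ∀ t, ∑ i ∈ Iic t, b i = ∑ i ∈ Iic t, a i ∨ ∑ i ∈ Iic t, b i + 1 = ∑ i ∈ Iic t, a i) :
    sortedPair a b := by
  intro t
  rw [sum_add_distrib]
  rcases h t with h | h <;> omega

section MoveUnit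

def moveUnit (a : Fin n → ℕ) (i j : Fin n) : Fin n → ℕ :=
  a - Pi.single i 1 + Pi.single j 1

variable {a α : Fin n → ℕ} {i j : Fin n}

theorem moveUnit_add_single (hai : 0 < a i) :
    moveUnit a i j + Pi.single i 1 = a + Pi.single j 1 := by
  funext k
  by_cases hk : k = i
  · subst hk
    simp only [moveUnit, Pi.add_apply, Pi.sub_apply, Pi.single_eq_same]
    omega
  · simp [moveUnit, hk]

theorem sum_moveUnit_add (hai : 0 < a i) (s : Finset (Fin n)) :
    ∑ k ∈ s, moveUnit a i j k + (if i ∈ s then 1 else 0)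
      = ∑ k ∈ s, a k + (if j ∈ s then 1 else 0) := by
  rw [← sum_pi_single', ← sum_pi_single', ← sum_add_distrib, ← sum_add_distrib]
  exact sum_congr rfl fun k _ => congrFun (moveUnit_add_single hai) k

theorem moveUnit_mem_VT (ha : a ∈ VT n d α) (hai : 0 < a i) (haj : a j < α j) :
    moveUnit a i j ∈ VT n d α := by
  refine ⟨?_, fun k => ?_⟩
  · have h := sum_moveUnit_add (j := j) hai univ
    simp only [mem_univ, if_true] at h
    have := ha.1
    omega
  · have := ha.2 k
    by_cases hk : k = j
    · subst hk
      simp only [moveUnit, Pi.add_apply, Pi.sub_apply, Pi.single_eq_same]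
      omega
    · simp only [moveUnit, Pi.add_apply, Pi.sub_apply, Pi.single_eq_of_ne hk]
      omega

theorem sum_Iic_moveUnit (hij : i ⋖ j) (hai : 0 < a i) (t : Fin n) :
    ∑ k ∈ Iic t, moveUnit a i j k + (if t = i then 1 else 0) = ∑ k ∈ Iic t, a k := by
  have h := sum_moveUnit_add (j := j) hai (Iic t)
  have hij : i.val + 1 = j.val := by simpa using hij
  have hmem : (if i ∈ Iic t then 1 else 0)
      = (if j ∈ Iic t then 1 else 0) + (if t = i then 1 else 0) := by
    simp only [mem_Iic, Fin.le_def, Fin.ext_iff]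
    split_ifs <;> omega
  omega

theorem lexGT_moveUnit (hij : i < j) (hai : 0 < a i) : lexGT a (moveUnit a i j) := by
  refine ⟨i, fun k hk => ?_, ?_⟩
  · simp [moveUnit, hk.ne, (hk.trans hij).ne]
  · simp only [moveUnit, Pi.add_apply, Pi.sub_apply, Pi.single_eq_same,
      Pi.single_eq_of_ne hij.ne]
    omega

theorem sortedPair_moveUnit (hij : i ⋖ j) (hai : 0 < a i) : sortedPair a (moveUnit a i j) :=
  sortedPair_of_sum_Iic fun t => by
    have := sum_Iic_moveUnit hij hai t
    split_ifs at this <;> omega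

theorem sigSet_moveUnit (hij : i ⋖ j) (hai : 0 < a i) : sigSet a (moveUnit a i j) = {i} := by
  ext t
  have := sum_Iic_moveUnit hij hai t
  simp only [sigSet, mem_filter, mem_univ, true_and, mem_singleton]
  by_cases ht : t = i
  · subst ht
    simpa using this
  · simp only [ht, if_false, add_zero, iff_false] at this ⊢
    omega

theorem exists_sorted_step_of_covBy (ha : a ∈ VT n d α) (hij : i ⋖ j) (hai : 0 < a i)
    (haj : a j < α j) :
    ∃ b ∈ VT n d α, lexGT a b ∧ sortedPair a b ∧ #(sigSet a b) = 1 :=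
  ⟨moveUnit a i j, moveUnit_mem_VT ha hai haj, lexGT_moveUnit hij.lt hai,
    sortedPair_moveUnit hij hai, by rw [sigSet_moveUnit hij hai, card_singleton]⟩

end MoveUnit

section Greedy

variable {α η a : Fin n → ℕ} (hη : ∀ i, η i = min (α i) (d - ∑ j ∈ Ioi i, η j))
include hη

theorem sum_Ioi_eq_min (i : Fin n) : ∑ j ∈ Ioi i, η j = min (∑ j ∈ Ioi i, α j) d := by
  induction i using WellFoundedGT.induction with
  | _ i ih =>
  by_cases hi : IsMax i
  · simp [Ioi_eq_empty.2 hi]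
  obtain ⟨k, hik⟩ := not_isMax_iff.1 hi
  obtain ⟨j, hij, -⟩ := exists_covBy_le_of_lt hik
  have hIoi : Ioi i = Ici j := coe_injective (by simpa using hij.Ioi_eq)
  rw [hIoi, ← add_sum_Ioi_eq_sum_Ici, ← add_sum_Ioi_eq_sum_Ici, hη j, ih j hij.lt]
  omega

theorem le_of_eq_min (i : Fin n) : η i ≤ α i :=
  hη i ▸ min_le_left _ _

theorem sum_eq_of_eq_min (hd : d ≤ ∑ i, α i) : ∑ i, η i = d := by
  cases n with
  | zero => simp_all
  | succ n =>
    have hIci : Ici (0 : Fin (n + 1)) = univ := by ext; simp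
    rw [← hIci, ← add_sum_Ioi_eq_sum_Ici] at hd ⊢
    rw [hη 0, sum_Ioi_eq_min hη 0]
    omega

theorem sum_Ioi_le_of_eq_min (ha : a ∈ VT n d α) (t : Fin n) :
    ∑ j ∈ Ioi t, a j ≤ ∑ j ∈ Ioi t, η j := by
  rw [sum_Ioi_eq_min hη]
  exact le_min (sum_le_sum fun j _ => ha.2 j) (ha.1 ▸ sum_le_sum_of_subset (subset_univ _))

theorem sum_Iic_le_of_eq_min (hd : d ≤ ∑ i, α i) (ha : a ∈ VT n d α) (t : Fin n) :
    ∑ j ∈ Iic t, η j ≤ ∑ j ∈ Iic t, a j := by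
  have ha' := sum_Iic_add_sum_Ioi a t
  have hη' := sum_Iic_add_sum_Ioi η t
  have := sum_Ioi_le_of_eq_min hη ha t
  rw [ha.1] at ha'
  rw [sum_eq_of_eq_min hη hd] at hη'
  omega

theorem eq_or_lexGT_of_eq_min (hd : d ≤ ∑ i, α i) (ha : a ∈ VT n d α) : a = η ∨ lexGT a η := by
  rcases lt_trichotomy (toLex a) (toLex η) with h | h | h
  · obtain ⟨i, heq, hi⟩ := lexGT_iff_toLex_lt.2 h
    exact absurd (sum_Iic_le_of_eq_min hη hd ha i) (sum_Iic_lt_sum_Iic heq hi).not_ge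
  · exact Or.inl (toLex.injective h)
  · exact Or.inr (lexGT_iff_toLex_lt.2 h)

theorem exists_covBy_of_ne_eq_min (hd : d ≤ ∑ i, α i) (hα : ∀ k, 0 < α k)
    (ha : a ∈ VT n d α) (hne : a ≠ η) : ∃ i j, i ⋖ j ∧ 0 < a i ∧ a j < α j := by
  obtain ⟨i, heq, hi⟩ := (eq_or_lexGT_of_eq_min hη hd ha).resolve_left hne
  obtain ⟨k, hik, hak⟩ : ∃ k, i < k ∧ a k < α k := by
    by_contra! hfull
    have hsuffix : ∑ j ∈ Ioi i, η j ≤ ∑ j ∈ Ioi i, a j :=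
      (sum_le_sum fun j _ => le_of_eq_min hη j).trans
        (sum_le_sum fun j hj => hfull j (mem_Ioi.1 hj))
    have hprefix := sum_Iic_lt_sum_Iic heq hi
    have ha' := sum_Iic_add_sum_Ioi a i
    have hη' := sum_Iic_add_sum_Ioi η i
    rw [ha.1] at ha'
    rw [sum_eq_of_eq_min hη hd] at hη'
    omega
  exact exists_covBy_pos_lt hα hik ((Nat.zero_le _).trans_lt hi) hak

theorem exists_sorted_step_of_eq_min (hd : d ≤ ∑ i, α i) (hα : ∀ k, 0 < α k)
    (ha : a ∈ VT n d α) (hne : a ≠ η) :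
    ∃ b ∈ VT n d α, lexGT a b ∧ sortedPair a b ∧ #(sigSet a b) = 1 := by
  obtain ⟨i, j, hij, hai, haj⟩ := exists_covBy_of_ne_eq_min hη hd hα ha hne
  exact exists_sorted_step_of_covBy ha hij hai haj

theorem exists_sorted_chain_of_eq_min (hd : d ≤ ∑ i, α i) (hα : ∀ k, 0 < α k)
    (ha : a ∈ VT n d α) :
    ∃ (m : ℕ) (c : Fin (m + 1) → (Fin n → ℕ)), c 0 = a ∧ c (Fin.last m) = η ∧
      (∀ i, c i ∈ VT n d α) ∧ ∀ i : Fin m, lexGT (c i.castSucc) (c i.succ) ∧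
        sortedPair (c i.castSucc) (c i.succ) ∧ #(sigSet (c i.castSucc) (c i.succ)) = 1 := by
  refine (InvImage.wf toLex wellFounded_lt).exists_fin_chain (z := η)
    (R := fun b c => lexGT b c ∧ sortedPair b c ∧ #(sigSet b c) = 1) (fun b hb hne => ?_) ha
  obtain ⟨c, hc, hbc, hsort, hsig⟩ := exists_sorted_step_of_eq_min hη hd hα hb hne
  exact ⟨c, hc, lexGT_iff_toLex_lt.1 hbc, hbc, hsort, hsig⟩

theorem rank_nonneg_of_eq_min (hd : d ≤ ∑ i, α i) (ha : a ∈ VT n d α) :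
    0 ≤ ∑ j : Fin n, ((a j : ℤ) - η j) * ((n : ℤ) - 1 - j) := by
  set f : Fin n → ℤ := fun j => a j - η j
  have hf : ∑ j, f j = 0 := by
    simp only [f, sum_sub_distrib, ← Nat.cast_sum, ha.1, sum_eq_of_eq_min hη hd, sub_self]
  calc 0 ≤ ∑ t, ∑ j ∈ Iic t, f j := sum_nonneg fun t _ => by
        simpa [f, sum_sub_distrib, ← Nat.cast_sum] using sum_Iic_le_of_eq_min hη hd ha t
    _ = ∑ j, f j * (n - j) - ∑ j, f j := by rw [Fin.sum_sum_Iic_eq, hf, sub_zero]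
    _ = ∑ j, f j * (n - 1 - j) := by
        rw [← sum_sub_distrib]
        exact sum_congr rfl fun j _ => by ring

end Greedy

/-- For every `a ∈ V_{n,d}^α` with `a ≠ η` there is `b ∈ V_{n,d}^α` with
`a >_lex b ≥_lex η`, `(a,b)` sorted and `length(Δ(a,b)) = 1`. Consequently
`rank(a) ≥ 0` and there is a chain from `a` down to `η` of sorted steps of
signature-length one. -/
theorem stmt14 (n d : ℕ) (hn : 3 ≤ n) (α : Fin n → ℕ)
    (hα0 : 1 ≤ α ⟨0, by omega⟩) (hmono : Monotone α)
    (hdα : d < ∑ i, α i)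
    (η : Fin n → ℕ)
    (hη : ∀ i : Fin n, η i = min (α i) (d - ∑ j ∈ Finset.Ioi i, η j))
    (a : Fin n → ℕ) (ha : a ∈ VT n d α) (hne : a ≠ η) :
    (∃ b ∈ VT n d α, lexGT a b ∧ (b = η ∨ lexGT b η) ∧
        sortedPair a b ∧ (sigSet a b).card = 1) ∧
    0 ≤ ∑ j : Fin n, ((a j : ℤ) - (η j : ℤ)) * ((n : ℤ) - 1 - (j.1 : ℤ)) ∧
    ∃ (m : ℕ) (c : Fin (m + 1) → (Fin n → ℕ)),
      c 0 = a ∧ c (Fin.last m) = η ∧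
      (∀ i : Fin (m + 1), c i ∈ VT n d α) ∧
      ∀ i : Fin m, lexGT (c i.castSucc) (c i.succ) ∧
        sortedPair (c i.castSucc) (c i.succ) ∧
        (sigSet (c i.castSucc) (c i.succ)).card = 1 := by
  have hd : d ≤ ∑ i, α i := hdα.le
  have hα : ∀ k, 0 < α k := fun k => hα0.trans (hmono (Nat.zero_le k.1))
  obtain ⟨b, hb, hab, hsort, hsig⟩ := exists_sorted_step_of_eq_min hη hd hα ha hne
  exact ⟨⟨b, hb, hab, eq_or_lexGT_of_eq_min hη hd hb, hsort, hsig⟩,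
    rank_nonneg_of_eq_min hη hd ha, exists_sorted_chain_of_eq_min hη hd hα ha⟩
end

section
/- Let b = (1, 0, …, 0, a_n) ∈ ℕ^n with a_n = d − 1 and suppose α_n ≥ d, α_i ≥ 1 for all i. Then the sequence of tuples a^1 = (1,0,…,0,d−1), a^i = e^i + (d−1)e^n for 2 ≤ i ≤ n−1 (shifting the single unit one coordinate to the right at each step), ending at a^n = (0,…,0,d), forms a maximal clique of 𝒢(d,α), and it is the unique maximal clique whose last element equals η = (0,…,0,d) when α_n = d. -/
open Finset

theorem eq_of_forall_sum_Iic_eq {ι M : Type*} [PartialOrder ι] [LocallyFiniteOrderBot ι]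
    [WellFoundedLT ι] [DecidableEq ι] [AddCancelCommMonoid M] {f g : ι → M}
    (h : ∀ t, ∑ x ∈ Iic t, f x = ∑ x ∈ Iic t, g x) : f = g := by
  funext t
  induction t using WellFoundedLT.induction with
  | _ t ih =>
    have ht := h t
    rw [← Iio_insert, sum_insert notMem_Iio_self, sum_insert notMem_Iio_self,
      sum_congr rfl fun s hs => ih s (mem_Iio.mp hs)] at ht
    exact add_right_cancel ht

lemma sum_Iic_le_one_of_adjG {n : ℕ} {a b : Fin n → ℕ} (hab : adjG a b) {t : Fin n}
    (hb : ∑ x ∈ Iic t, b x = 0) : ∑ x ∈ Iic t, a x ≤ 1 := by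
  rcases hab with ⟨-, hs⟩ | ⟨-, hs⟩ <;>
  · have := hs t
    rw [sum_add_distrib, hb] at this
    omega

/-- The tuple `a^i = e^i + (d-1) e^n` of the paper, with `0`-indexed coordinates. -/
def unitTuple (n d : ℕ) (i : Fin n) : Fin n → ℕ :=
  fun t => (if t = i then 1 else 0) + (if t.1 = n - 1 then d - 1 else 0)

namespace unitTuple

variable {m d : ℕ}

lemma eq_single_add_single (i : Fin (m + 1)) :
    unitTuple (m + 1) d i = Pi.single i 1 + Pi.single (Fin.last m) (d - 1) := by
  funext t
  simp [unitTuple, Pi.single_apply, Fin.ext_iff]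

lemma sum_Iic (i t : Fin (m + 1)) :
    ∑ x ∈ Iic t, unitTuple (m + 1) d i x
      = (if i ≤ t then 1 else 0) + (if t = Fin.last m then d - 1 else 0) := by
  simp [eq_single_add_single, sum_add_distrib, sum_pi_single', Fin.last_le_iff]

lemma sum_eq (hd : 1 ≤ d) (i : Fin (m + 1)) : ∑ t, unitTuple (m + 1) d i t = d := by
  simp only [eq_single_add_single, Pi.add_apply, sum_add_distrib, sum_pi_single', mem_univ,
    if_true]
  omega

lemma mem_VT {α : Fin (m + 1) → ℕ} (hd : 1 ≤ d) (hα : ∀ i, 1 ≤ α i)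
    (hαlast : d ≤ α (Fin.last m)) (i : Fin (m + 1)) : unitTuple (m + 1) d i ∈ VT (m + 1) d α := by
  refine ⟨sum_eq hd i, fun t => ?_⟩
  have := hα t
  simp only [eq_single_add_single, Pi.add_apply, Pi.single_apply]
  split_ifs <;> subst_vars <;> omega

lemma sortedPair_of_le {i j : Fin (m + 1)} (hij : i ≤ j) :
    sortedPair (unitTuple (m + 1) d i) (unitTuple (m + 1) d j) := by
  intro t
  rw [sum_add_distrib, sum_Iic, sum_Iic]
  by_cases ht : t = Fin.last m
  · simp only [ht, Fin.le_last, if_true]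
    omega
  · simp only [ht, if_false, add_zero]
    split_ifs <;> grind

lemma lexGT_of_lt {i j : Fin (m + 1)} (hij : i < j) :
    lexGT (unitTuple (m + 1) d i) (unitTuple (m + 1) d j) :=
  ⟨i, fun s hs => by simp [unitTuple, hs.ne, (hs.trans hij).ne], by simp [unitTuple, hij.ne]⟩

lemma sum_Iic_last_eq_zero {t : Fin (m + 1)} (ht : t ≠ Fin.last m) :
    ∑ x ∈ Iic t, unitTuple (m + 1) d (Fin.last m) x = 0 := by
  simp [sum_Iic, Fin.last_le_iff, ht]

lemma exists_eq_of_sum_Iic_le_one (hd : 1 ≤ d) {b : Fin (m + 1) → ℕ} (hb : ∑ t, b t = d)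
    (hle : ∀ t ≠ Fin.last m, ∑ x ∈ Iic t, b x ≤ 1) : ∃ k, b = unitTuple (m + 1) d k := by
  have hlast : ∑ x ∈ Iic (Fin.last m), b x = d := by rwa [← Fin.top_eq_last, Iic_top]
  obtain ⟨k, hk, hmin⟩ := (univ.filter fun t => 1 ≤ ∑ x ∈ Iic t, b x).exists_min_image id
    ⟨Fin.last m, by simp [hlast, hd]⟩
  simp only [mem_filter, mem_univ, true_and, id] at hk hmin
  refine ⟨k, eq_of_forall_sum_Iic_eq fun t => ?_⟩
  rw [sum_Iic]
  by_cases ht : t = Fin.last m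
  · simp only [ht, hlast, Fin.le_last, if_true]
    omega
  · rw [if_neg ht, add_zero]
    split_ifs with hkt
    · exact le_antisymm (hle t ht) (hk.trans (sum_le_sum_of_subset (Iic_subset_Iic.mpr hkt)))
    · by_contra hne
      exact hkt (hmin t (by omega))

end unitTuple

section Clique

variable {m d : ℕ} {α : Fin (m + 1) → ℕ}

lemma isClique_image_unitTuple (hd : 1 ≤ d) (hα : ∀ i, 1 ≤ α i) (hαlast : d ≤ α (Fin.last m)) :
    isClique (m + 1) d α (univ.image (unitTuple (m + 1) d)) := by
  refine ⟨?_, ?_⟩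
  · simp only [coe_image, coe_univ, Set.image_univ]
    rintro _ ⟨i, rfl⟩
    exact unitTuple.mem_VT hd hα hαlast i
  · simp only [mem_image, mem_univ, true_and]
    rintro _ ⟨i, rfl⟩ _ ⟨j, rfl⟩ hij
    rcases lt_trichotomy i j with h | rfl | h
    · exact .inl ⟨unitTuple.lexGT_of_lt h, unitTuple.sortedPair_of_le h.le⟩
    · exact absurd rfl hij
    · exact .inr ⟨unitTuple.lexGT_of_lt h, unitTuple.sortedPair_of_le h.le⟩

lemma subset_image_unitTuple_of_isClique (hd : 1 ≤ d) {S : Finset (Fin (m + 1) → ℕ)}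
    (hS : isClique (m + 1) d α S) (hη : unitTuple (m + 1) d (Fin.last m) ∈ S) :
    S ⊆ univ.image (unitTuple (m + 1) d) := by
  intro b hb
  simp only [mem_image, mem_univ, true_and]
  by_cases hbη : b = unitTuple (m + 1) d (Fin.last m)
  · exact ⟨_, hbη.symm⟩
  have hadj := hS.2 b hb _ hη hbη
  obtain ⟨k, rfl⟩ := unitTuple.exists_eq_of_sum_Iic_le_one hd (hS.1 hb).1 fun t ht =>
    sum_Iic_le_one_of_adjG hadj (unitTuple.sum_Iic_last_eq_zero ht)
  exact ⟨k, rfl⟩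

lemma isMaxClique_image_unitTuple (hd : 1 ≤ d) (hα : ∀ i, 1 ≤ α i)
    (hαlast : d ≤ α (Fin.last m)) : isMaxClique (m + 1) d α (univ.image (unitTuple (m + 1) d)) :=
  ⟨isClique_image_unitTuple hd hα hαlast, fun _ hT hsub => hsub.antisymm <|
    subset_image_unitTuple_of_isClique hd hT (hsub (mem_image_of_mem _ (mem_univ _)))⟩

lemma eq_image_unitTuple_of_isMaxClique (hd : 1 ≤ d) (hα : ∀ i, 1 ≤ α i)
    (hαlast : d ≤ α (Fin.last m)) {S : Finset (Fin (m + 1) → ℕ)} (hS : isMaxClique (m + 1) d α S)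
    (hη : unitTuple (m + 1) d (Fin.last m) ∈ S) : S = univ.image (unitTuple (m + 1) d) :=
  hS.2 _ (isClique_image_unitTuple hd hα hαlast) (subset_image_unitTuple_of_isClique hd hS.1 hη)

end Clique

/-- The tuple sequence `a^1 = (1,0,…,0,d-1)`, `a^i = e^i + (d-1)e^n`, …,
`a^n = (0,…,0,d)` forms a maximal clique of `𝒢(d,α)`, and when `α_n = d` it is
the unique maximal clique containing (i.e. ending at) `η = (0,…,0,d)`. -/
theorem stmt18 (n d : ℕ) (hn : 3 ≤ n) (α : Fin n → ℕ)
    (hα1 : ∀ i, 1 ≤ α i)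
    (hαd : ∀ i, α i ≤ d)
    (hαn : d ≤ α ⟨n - 1, by omega⟩) :
    (∀ i j : Fin n, i < j →
      lexGT (fun t : Fin n => (if t = i then 1 else 0) + (if t.1 = n - 1 then d - 1 else 0))
        (fun t : Fin n => (if t = j then 1 else 0) + (if t.1 = n - 1 then d - 1 else 0))) ∧
    isMaxClique n d α
      (Finset.image
        (fun i : Fin n => fun t : Fin n =>
          (if t = i then 1 else 0) + (if t.1 = n - 1 then d - 1 else 0))
        Finset.univ) ∧
    (α ⟨n - 1, by omega⟩ = d → ∀ S : Finset (Fin n → ℕ), isMaxClique n d α S →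
      (fun t : Fin n => if t.1 = n - 1 then d else 0) ∈ S →
      S = Finset.image
        (fun i : Fin n => fun t : Fin n =>
          (if t = i then 1 else 0) + (if t.1 = n - 1 then d - 1 else 0))
        Finset.univ) := by
  obtain ⟨m, rfl⟩ : ∃ m, n = m + 1 := ⟨n - 1, by omega⟩
  have hd : 1 ≤ d := (hα1 0).trans (hαd 0)
  have hη : (fun t : Fin (m + 1) => if t.1 = m + 1 - 1 then d else 0)
      = unitTuple (m + 1) d (Fin.last m) := by
    funext t
    simp only [unitTuple, Fin.ext_iff, Fin.val_last, add_tsub_cancel_right]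
    split_ifs <;> omega
  exact ⟨fun i j => unitTuple.lexGT_of_lt, isMaxClique_image_unitTuple hd hα1 hαn,
    fun _ S hS hηS => eq_image_unitTuple_of_isMaxClique hd hα1 hαn hS (hη ▸ hηS)⟩
end
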